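/- Let (Z₁, Z₂) be a max-stable pair with extremal coefficient θ ∈ [1,2], and let ν_F := (1/2)·E[ |F(Z₁) − F(Z₂)| ] denote its F-madogram. Then ν_F = (θ−1)/(2(θ+1)); in particular 0 ≤ ν_F ≤ 1/6 and θ = (1/2 + ν_F)/(1/2 − ν_F). -/

import Mathlib

open MeasureTheory Real Filter

/-- The unit Fréchet distribution function: `F(z) = exp(-1/z)` for `z > 0`, `0` otherwise. -/
noncomputable def frechetCDF (z : ℝ) : ℝ := if 0 < z then Real.exp (-1 / z) else 0

lemma frechet_nonneg (z : ℝ) : 0 ≤ frechetCDF z := by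
  unfold frechetCDF; split <;> positivity

lemma frechet_lt_one (z : ℝ) : frechetCDF z < 1 := by
  unfold frechetCDF; split
  · rw [Real.exp_lt_one_iff, neg_div, neg_lt_zero]
    rename_i h
    positivity
  · norm_num

lemma frechet_mono : Monotone frechetCDF := by
  intro a b hab
  unfold frechetCDF
  split
  · rename_i ha
    rw [if_pos (lt_of_lt_of_le ha hab)]
    apply Real.exp_le_exp.mpr
    rw [neg_div, neg_div, neg_le_neg_iff]
    exact one_div_le_one_div_of_le ha hab
  · split
    · positivity
    · exact le_refl 0

lemma frechet_le_iff {t : ℝ} (ht0 : 0 < t) (ht1 : t < 1) (z : ℝ) :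
    frechetCDF z ≤ t ↔ z ≤ 1 / (-Real.log t) := by
  have hlt : Real.log t < 0 := Real.log_neg ht0 ht1
  have hc : 0 < -Real.log t := by linarith
  unfold frechetCDF
  split
  · rename_i hz
    rw [← Real.le_log_iff_exp_le ht0, neg_div, neg_le, le_div_iff₀ hz, le_div_iff₀ hc, mul_comm]
  · rename_i hz
    have h1 : z ≤ 1 / (-Real.log t) := le_trans (not_lt.mp hz) (by positivity)
    exact iff_of_true ht0.le h1

lemma frechet_measurable : Measurable frechetCDF := frechet_mono.measurable

lemma frechet_comp_integrable {Ω : Type*} [MeasurableSpace Ω] (μ : Measure Ω)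
    [IsProbabilityMeasure μ] (X : Ω → ℝ) (hX : Measurable X) :
    Integrable (fun ω => frechetCDF (X ω)) μ := by
  refine ⟨(frechet_measurable.comp hX).aestronglyMeasurable,
    HasFiniteIntegral.of_bounded (C := 1) (ae_of_all μ fun ω => ?_)⟩
  rw [Real.norm_eq_abs, abs_of_nonneg (frechet_nonneg _)]
  exact (frechet_lt_one _).le

lemma key_integral {Ω : Type*} [MeasurableSpace Ω] (μ : Measure Ω) [IsProbabilityMeasure μ]
    (X : Ω → ℝ) (hX : Measurable X) (r : ℝ) (hr : 1 ≤ r)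
    (hcdf : ∀ z : ℝ, 0 < z → (μ {ω | X ω ≤ z}).toReal = Real.exp (-r / z)) :
    ∫ ω, frechetCDF (X ω) ∂μ = r / (r + 1) := by
  set f : Ω → ℝ := fun ω => frechetCDF (X ω) with hf
  have hmeas : Measurable f := frechet_measurable.comp hX
  have hint : Integrable f μ := frechet_comp_integrable μ X hX
  rw [hint.integral_eq_integral_meas_lt (ae_of_all μ fun ω => frechet_nonneg _)]
  have hcongr : ∀ t ∈ Set.Ioi (0:ℝ),
      (μ {a | t < f a}).toReal = Set.indicator (Set.Ioc (0:ℝ) 1) (fun t => 1 - t ^ r) t := by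
    intro t ht
    have ht0 : 0 < t := ht
    by_cases ht1 : t < 1
    · have hind : Set.indicator (Set.Ioc (0:ℝ) 1) (fun t => 1 - t ^ r) t = 1 - t ^ r :=
        Set.indicator_of_mem (Set.mem_Ioc.mpr ⟨ht0, ht1.le⟩) _
      rw [hind]
      have hset : {a | t < f a} = {a | f a ≤ t}ᶜ := by ext a; simp [not_le]
      have hset2 : {a | f a ≤ t} = {a | X a ≤ 1 / (-Real.log t)} := by
        ext a; exact frechet_le_iff ht0 ht1 (X a)
      have hc : 0 < -Real.log t := by
        have := Real.log_neg ht0 ht1; linarith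
      have hz : (0:ℝ) < 1 / (-Real.log t) := by positivity
      have hval : (μ {a | f a ≤ t}).toReal = t ^ r := by
        rw [hset2, hcdf _ hz]
        rw [Real.rpow_def_of_pos ht0]
        congr 1
        field_simp
      have hms : MeasurableSet {a | f a ≤ t} := measurableSet_le hmeas measurable_const
      rw [hset, prob_compl_eq_one_sub hms,
        ENNReal.toReal_sub_of_le prob_le_one ENNReal.one_ne_top, ENNReal.toReal_one, hval]
    · have hempty : {a | t < f a} = ∅ := by
        ext a
        simp only [Set.mem_setOf_eq, Set.mem_empty_iff_false, iff_false, not_lt]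
        exact le_trans (frechet_lt_one _).le (not_lt.mp ht1)
      have hind : Set.indicator (Set.Ioc (0:ℝ) 1) (fun t => 1 - t ^ r) t = 0 := by
        by_cases h1 : t ≤ 1
        · have : t = 1 := le_antisymm h1 (not_lt.mp ht1)
          subst this
          rw [Set.indicator_of_mem (Set.mem_Ioc.mpr ⟨ht0, le_refl 1⟩)]
          simp
        · exact Set.indicator_of_notMem (fun hmem => h1 hmem.2) _
      rw [hempty, hind]; simp
  simp only [measureReal_def]
  rw [setIntegral_congr_fun measurableSet_Ioi hcongr,
    setIntegral_indicator measurableSet_Ioc,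
    Set.inter_eq_self_of_subset_right Set.Ioc_subset_Ioi_self,
    ← intervalIntegral.integral_of_le zero_le_one,
    intervalIntegral.integral_sub intervalIntegrable_const (intervalIntegral.intervalIntegrable_rpow' (by linarith)),
    integral_rpow (Or.inl (by linarith))]
  have hr1 : r + 1 ≠ 0 := by linarith
  rw [Real.one_rpow, Real.zero_rpow hr1]
  simp only [intervalIntegral.integral_const, smul_eq_mul, sub_zero, mul_one]
  field_simp
  ring

/-- The F-madogram of a max-stable pair with extremal coefficient `θ` equals
`(θ-1)/(2(θ+1))`; in particular it lies in `[0, 1/6]` and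
`θ = (1/2 + νF)/(1/2 - νF)`. -/
theorem f_madogram_max_stable
    {Ω : Type*} [MeasurableSpace Ω] (μ : Measure Ω) [IsProbabilityMeasure μ]
    (Z₁ Z₂ : Ω → ℝ) (hZ₁ : Measurable Z₁) (hZ₂ : Measurable Z₂)
    (θ : ℝ) (hθ : θ ∈ Set.Icc (1:ℝ) 2)
    (hm1 : ∀ z : ℝ, (μ {ω | Z₁ ω ≤ z}).toReal = frechetCDF z)
    (hm2 : ∀ z : ℝ, (μ {ω | Z₂ ω ≤ z}).toReal = frechetCDF z)
    (hjoint : ∀ z : ℝ, 0 < z →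
      (μ {ω | Z₁ ω ≤ z ∧ Z₂ ω ≤ z}).toReal = Real.exp (-θ / z)) :
    (1/2) * (∫ ω, |frechetCDF (Z₁ ω) - frechetCDF (Z₂ ω)| ∂μ) = (θ - 1) / (2 * (θ + 1)) ∧
    0 ≤ (1/2) * (∫ ω, |frechetCDF (Z₁ ω) - frechetCDF (Z₂ ω)| ∂μ) ∧
    (1/2) * (∫ ω, |frechetCDF (Z₁ ω) - frechetCDF (Z₂ ω)| ∂μ) ≤ 1/6 ∧
    θ = (1/2 + (1/2) * (∫ ω, |frechetCDF (Z₁ ω) - frechetCDF (Z₂ ω)| ∂μ))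
          / (1/2 - (1/2) * (∫ ω, |frechetCDF (Z₁ ω) - frechetCDF (Z₂ ω)| ∂μ)) := by
  obtain ⟨hθ1, hθ2⟩ := hθ
  have hθp : (0:ℝ) < θ + 1 := by linarith
  have h1 : ∫ ω, frechetCDF (Z₁ ω) ∂μ = 1 / 2 := by
    have := key_integral μ Z₁ hZ₁ 1 le_rfl (fun z hz => by
      rw [hm1 z]; unfold frechetCDF; rw [if_pos hz])
    rw [this]; norm_num
  have h2 : ∫ ω, frechetCDF (Z₂ ω) ∂μ = 1 / 2 := by
    have := key_integral μ Z₂ hZ₂ 1 le_rfl (fun z hz => by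
      rw [hm2 z]; unfold frechetCDF; rw [if_pos hz])
    rw [this]; norm_num
  have hMmeas : Measurable (fun ω => max (Z₁ ω) (Z₂ ω)) := hZ₁.max hZ₂
  have hM : ∫ ω, frechetCDF (max (Z₁ ω) (Z₂ ω)) ∂μ = θ / (θ + 1) := by
    refine key_integral μ _ hMmeas θ hθ1 (fun z hz => ?_)
    have : {ω | max (Z₁ ω) (Z₂ ω) ≤ z} = {ω | Z₁ ω ≤ z ∧ Z₂ ω ≤ z} := by
      ext ω; simp [max_le_iff]
    rw [this]; exact hjoint z hz
  have intA := frechet_comp_integrable μ Z₁ hZ₁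
  have intB := frechet_comp_integrable μ Z₂ hZ₂
  have intM := frechet_comp_integrable μ _ hMmeas
  have hI : ∫ ω, |frechetCDF (Z₁ ω) - frechetCDF (Z₂ ω)| ∂μ = (θ - 1) / (θ + 1) := by
    have hpt : ∀ ω, |frechetCDF (Z₁ ω) - frechetCDF (Z₂ ω)| =
        2 * frechetCDF (max (Z₁ ω) (Z₂ ω)) - frechetCDF (Z₁ ω) - frechetCDF (Z₂ ω) := by
      intro ω
      rw [frechet_mono.map_max]
      rcases le_total (frechetCDF (Z₁ ω)) (frechetCDF (Z₂ ω)) with h | h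
      · rw [abs_of_nonpos (by linarith), max_eq_right h]; ring
      · rw [abs_of_nonneg (by linarith), max_eq_left h]; ring
    calc ∫ ω, |frechetCDF (Z₁ ω) - frechetCDF (Z₂ ω)| ∂μ
        = ∫ ω, (2 * frechetCDF (max (Z₁ ω) (Z₂ ω)) - frechetCDF (Z₁ ω) - frechetCDF (Z₂ ω)) ∂μ :=
          integral_congr_ae (ae_of_all μ hpt)
      _ = (∫ ω, 2 * frechetCDF (max (Z₁ ω) (Z₂ ω)) ∂μ) - (∫ ω, frechetCDF (Z₁ ω) ∂μ)
            - (∫ ω, frechetCDF (Z₂ ω) ∂μ) := by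
          have int1 : Integrable (fun ω => 2 * frechetCDF (max (Z₁ ω) (Z₂ ω))
              - frechetCDF (Z₁ ω)) μ := (intM.const_mul 2).sub intA
          rw [integral_sub int1 intB, integral_sub (intM.const_mul 2) intA]
      _ = (θ - 1) / (θ + 1) := by
          rw [integral_const_mul, hM, h1, h2]
          have hne : θ + 1 ≠ 0 := ne_of_gt hθp
          field_simp
          ring
  refine ⟨by rw [hI, div_mul_div_comm, one_mul], ?_, ?_, ?_⟩
  · rw [hI]
    have : (0:ℝ) ≤ θ - 1 := by linarith
    positivity
  · rw [hI]
    have h : (θ - 1) / (θ + 1) ≤ 1/3 := by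
      rw [div_le_div_iff₀ hθp (by norm_num : (0:ℝ) < 3)]
      linarith
    linarith
  · rw [hI]
    have hne : θ + 1 ≠ 0 := ne_of_gt hθp
    have hden : (1:ℝ)/2 - 1/2 * ((θ - 1) / (θ + 1)) = 1 / (θ + 1) := by
      rw [eq_div_iff hne, sub_mul, mul_assoc, div_mul_cancel₀ _ hne]
      ring
    have hnum : (1:ℝ)/2 + 1/2 * ((θ - 1) / (θ + 1)) = θ / (θ + 1) := by
      rw [eq_div_iff hne, add_mul, mul_assoc, div_mul_cancel₀ _ hne]
      ring
    rw [hden, hnum, div_div_div_cancel_right₀, div_one]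
    exact hne
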